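/- Let A be an integral domain that can be written as a locally finite intersection A = ⋂_{p∈Δ} A_p of localizations at primes p ∈ Δ ⊆ Spec(A) such that each A_p is v-coherent. Then A is v-coherent. -/

import Mathlib

open scoped nonZeroDivisors

section TOperation

variable (D : Type*) [CommRing D] [IsDomain D]
  (F : Type*) [Field F] [Algebra D F] [IsFractionRing D F]

/-- The `v`-operation on fractional ideals of `D`: `I^v = (D : (D : I))`. -/
noncomputable def vOp (I : FractionalIdeal D⁰ F) : FractionalIdeal D⁰ F :=
  1 / (1 / I)

/-- The `t`-operation (as a set): `N^t = ⋃ {J^v : J ⊆ N, J a finitely generated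
fractional ideal}`. -/
noncomputable def tSet (N : Submodule D F) : Set F :=
  ⋃ J ∈ {J : FractionalIdeal D⁰ F | (J : Submodule D F) ≤ N ∧ (J : Submodule D F).FG},
    (vOp D F J : Set F)

/-- The image of an integral ideal of `D` in `F`, as a `D`-submodule of `F`. -/
def idlSub (I : Ideal D) : Submodule D F :=
  ((I : FractionalIdeal D⁰ F) : Submodule D F)

/-- A (nonzero) ideal `I` of `D` is a `t`-ideal if `I^t = I`. -/
def IsTIdeal (I : Ideal D) : Prop :=
  I ≠ 0 ∧ tSet D F (idlSub D F I) = (idlSub D F I : Set F)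

/-- A (nonzero) ideal `I` of `D` is `t`-finite if `J^t = I^t` for some finitely
generated (nonzero) ideal `J`. -/
def IsTFinite (I : Ideal D) : Prop :=
  I ≠ 0 ∧ ∃ J : Ideal D, J ≠ 0 ∧ J.FG ∧ tSet D F (idlSub D F J) = tSet D F (idlSub D F I)

/-- An ideal of `D` is `t`-maximal if it is maximal among proper `t`-ideals. -/
def IsTMaximal (M : Ideal D) : Prop :=
  M ≠ ⊤ ∧ IsTIdeal D F M ∧ ∀ J : Ideal D, J ≠ ⊤ → IsTIdeal D F J → M ≤ J → J = M

/-- `D` has the `t`-finite character if every nonzero element of `D` lies in only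
finitely many `t`-maximal ideals. -/
def HasTFiniteCharacter : Prop :=
  ∀ a : D, a ≠ 0 → {M : Ideal D | IsTMaximal D F M ∧ a ∈ M}.Finite

/-- A (nonzero) ideal `I` of `D` is `t`-invertible if `(I·I⁻¹)^t = D`, where
`I⁻¹ = (D : I)`. -/
def IsTInvertible (I : Ideal D) : Prop :=
  I ≠ 0 ∧ tSet D F
      (((I : FractionalIdeal D⁰ F) * (1 / (I : FractionalIdeal D⁰ F)) :
        FractionalIdeal D⁰ F) : Submodule D F) =
    (((1 : FractionalIdeal D⁰ F) : Submodule D F) : Set F)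

/-- `D` is `v`-coherent: for every nonzero finitely generated ideal `I`,
`I⁻¹ = J^v` for some finitely generated (nonzero) fractional ideal `J`. -/
def IsVCoherent : Prop :=
  ∀ I : Ideal D, I ≠ 0 → I.FG →
    ∃ J : FractionalIdeal D⁰ F, J ≠ 0 ∧ (J : Submodule D F).FG ∧
      1 / (I : FractionalIdeal D⁰ F) = vOp D F J

/-- `D` is a PvMD if every nonzero finitely generated ideal of `D` is `t`-invertible. -/
def IsPvMD : Prop :=
  ∀ I : Ideal D, I ≠ 0 → I.FG → IsTInvertible D F I

/-- `D` is a GCD domain: any two elements have a greatest common divisor. -/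
def IsGCDDomain (D : Type*) [CommRing D] [IsDomain D] : Prop :=
  ∀ a b : D, ∃ d : D, d ∣ a ∧ d ∣ b ∧ ∀ c : D, c ∣ a → c ∣ b → c ∣ d

end TOperation

variable (A : Type*) [CommRing A] [IsDomain A]
  (K : Type*) [Field K] [Algebra A K] [IsFractionRing A K]

/-- The localization `A_p` of `A` at a prime ideal `p`, realized as a subalgebra of the
quotient field `K` of `A`. -/
@[reducible] noncomputable def locAt (p : Ideal A) (hp : p.IsPrime) : Subalgebra A K :=
  Localization.subalgebra K (@Ideal.primeCompl A _ p hp)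
    (@Ideal.primeCompl_le_nonZeroDivisors A _ _ p hp)

/-!
Fix a nonzero finitely generated ideal `I` and `0 ≠ a ∈ I`. For each of the finitely many
`p ∈ Δ` in which `a` is not a unit, v-coherence of `A_p` gives `(A_p : I A_p) = J_p^v` with `J_p`
finitely generated, and clearing the denominators of generators of `J_p` gives a finite set
`E_p ⊆ (A : I)`. Let `J` be generated by `1` and all these `E_p`. Then `J ⊆ (A : I)` gives
`J^v ⊆ (A : I)^v = (A : I)`. Conversely, for `x ∈ (A : J)` and `t ∈ (A : I)`, `x t ∈ A_p` for
every `p ∈ Δ`: if `a` is a unit of `A_p` then `x ∈ A` and `t ∈ a⁻¹ A ⊆ A_p`; otherwise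
`x E_p ⊆ A_p` forces `x ∈ (A_p : J_p) = (A_p : (A_p : I A_p))`. Hence `x t ∈ ⋂ A_p = A`, that
is, `(A : I) ⊆ J^v`.
-/

open IsLocalization (coeSubmodule)

namespace Submodule

variable {R A : Type*} [CommSemiring R] [CommSemiring A] [Algebra R A]

theorem mem_div_span_iff {N : Submodule R A} {G : Set A} {x : A} :
    x ∈ N / span R G ↔ ∀ g ∈ G, x * g ∈ N :=
  span_le (p := N.comap (LinearMap.mulLeft R x))

theorem le_one_div_one_div (N : Submodule R A) : N ≤ 1 / (1 / N) :=
  fun n hn y hy => mul_comm y n ▸ hy n hn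

theorem one_div_one_div_le_one_div {N N' : Submodule R A} (h : N' ≤ 1 / N) :
    1 / (1 / N') ≤ 1 / N :=
  fun _ hx n hn => hx n fun n' hn' => mul_comm n' n ▸ h hn' n hn

theorem one_div_one_div_one_div (N : Submodule R A) : 1 / (1 / (1 / N)) = 1 / N :=
  le_antisymm (one_div_one_div_le_one_div le_rfl) (le_one_div_one_div _)

end Submodule

theorem IsLocalization.mem_one_div_coeSubmodule_iff {R S : Type*} [CommSemiring R]
    [CommSemiring S] [Algebra R S] {I : Ideal R} {x : S} :
    x ∈ (1 : Submodule R S) / coeSubmodule S I ↔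
      ∀ i ∈ I, x * algebraMap R S i ∈ (1 : Submodule R S) :=
  ⟨fun h i hi => h _ ⟨i, hi, rfl⟩, by rintro h _ ⟨i, hi, rfl⟩; exact h i hi⟩

section VCoherent

variable {R K : Type*} [CommRing R] [IsDomain R] [Field K] [Algebra R K] [IsFractionRing R K]

theorem FractionalIdeal.one_div_ne_zero {J : FractionalIdeal R⁰ K} (hJ : J ≠ 0) :
    1 / J ≠ 0 :=
  fun h => (bot_lt_mul_inv hJ).ne' (by rw [inv_eq, h, mul_zero]; rfl)

theorem isVCoherent_iff : IsVCoherent R K ↔ ∀ I : Ideal R, I ≠ 0 → I.FG →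
    ∃ G : Set K, G.Finite ∧ Submodule.span R G ≠ ⊥ ∧
      1 / coeSubmodule K I = 1 / (1 / Submodule.span R G) := by
  have coe_eq_iff (I : Ideal R) (hI : I ≠ 0) (J : FractionalIdeal R⁰ K) (hJ : J ≠ 0) :
      1 / (I : FractionalIdeal R⁰ K) = vOp R K J ↔
        1 / coeSubmodule K I = 1 / (1 / (J : Submodule R K)) := by
    rw [vOp, ← FractionalIdeal.coeToSubmodule_inj,
      FractionalIdeal.coe_div (FractionalIdeal.coeIdeal_ne_zero.mpr hI),
      FractionalIdeal.coe_div (FractionalIdeal.one_div_ne_zero hJ), FractionalIdeal.coe_div hJ,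
      FractionalIdeal.coe_one, FractionalIdeal.coe_coeIdeal]
  constructor
  · intro h I hI hfg
    obtain ⟨J, hJ, hJfg, hIJ⟩ := h I hI hfg
    obtain ⟨G, hG, hGJ⟩ := Submodule.fg_def.mp hJfg
    rw [coe_eq_iff I hI J hJ, ← hGJ] at hIJ
    exact ⟨G, hG, hGJ ▸ FractionalIdeal.coeToSubmodule_ne_bot.mpr hJ, hIJ⟩
  · intro h I hI hfg
    obtain ⟨G, hG, hG0, hIG⟩ := h I hI hfg
    let J : FractionalIdeal R⁰ K :=
      ⟨Submodule.span R G, FractionalIdeal.isFractional_of_fg (Submodule.fg_span hG)⟩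
    have hJ : J ≠ 0 := FractionalIdeal.coeToSubmodule_ne_bot.mp hG0
    exact ⟨J, hJ, Submodule.fg_span hG, (coe_eq_iff I hI J hJ).mpr hIG⟩

end VCoherent

section Localization

variable {A K : Type*} [CommRing A] [Field K] [Algebra A K] {B : Subalgebra A K}

theorem Subalgebra.mem_one_submodule_iff {x : K} : x ∈ (1 : Submodule B K) ↔ x ∈ B :=
  Submodule.mem_one.trans ⟨fun ⟨y, hy⟩ => hy ▸ y.2, fun h => ⟨⟨x, h⟩, rfl⟩⟩

theorem Subalgebra.mem_of_mul_mem_of_isUnit {a : A} (ha : IsUnit (algebraMap A B a)) {x : K}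
    (hx : x * algebraMap A K a ∈ B) : x ∈ B := by
  obtain ⟨u, hu⟩ := ha
  have hinv : ((↑u⁻¹ : B) : K) * algebraMap A K a = 1 := congrArg Subtype.val (hu ▸ u.inv_mul)
  simpa only [mul_left_comm _ x, hinv, mul_one] using B.mul_mem (↑u⁻¹ : B).2 hx

theorem Subalgebra.mem_of_mem_one_submodule {x : K} (hx : x ∈ (1 : Submodule A K)) : x ∈ B :=
  (Submodule.one_le (P := Subalgebra.toSubmodule B)).mpr B.one_mem hx

theorem Subalgebra.mem_of_mem_one_div_coeSubmodule_of_isUnit {I : Ideal A} {a : A} (haI : a ∈ I)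
    (ha : IsUnit (algebraMap A B a)) {t : K} (ht : t ∈ (1 : Submodule A K) / coeSubmodule K I) :
    t ∈ B :=
  B.mem_of_mul_mem_of_isUnit ha
    (B.mem_of_mem_one_submodule (IsLocalization.mem_one_div_coeSubmodule_iff.mp ht a haI))

theorem Subalgebra.mem_one_div_coeSubmodule_map {I : Ideal A} {t : K}
    (ht : t ∈ (1 : Submodule A K) / coeSubmodule K I) :
    t ∈ (1 : Submodule B K) / coeSubmodule K (I.map (algebraMap A B)) := by
  rw [Ideal.map, IsLocalization.coeSubmodule_span, Submodule.mem_div_span_iff]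
  rintro _ ⟨_, ⟨i, hi, rfl⟩, rfl⟩
  rw [Subalgebra.mem_one_submodule_iff, ← IsScalarTower.algebraMap_apply]
  exact B.mem_of_mem_one_submodule (IsLocalization.mem_one_div_coeSubmodule_iff.mp ht i hi)

theorem exists_mem_algebraMap_mul_mem_one_div_coeSubmodule (M : Submonoid A)
    [IsLocalization M B] {I : Ideal A} (hI : I.FG) {g : K}
    (hg : g ∈ (1 : Submodule B K) / coeSubmodule K (I.map (algebraMap A B))) :
    ∃ s ∈ M, algebraMap A K s * g ∈ (1 : Submodule A K) / coeSubmodule K I := by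
  obtain ⟨G, rfl⟩ := hI
  have hgB (i : G) : g * algebraMap A K i ∈ B := by
    rw [← Subalgebra.mem_one_submodule_iff, IsScalarTower.algebraMap_apply A B K]
    exact IsLocalization.mem_one_div_coeSubmodule_iff.mp hg _
      (Ideal.mem_map_of_mem _ (Submodule.subset_span i.2))
  obtain ⟨s, hs⟩ :=
    IsLocalization.exist_integer_multiples_of_finite M fun i => (⟨_, hgB i⟩ : B)
  refine ⟨s, s.2, ?_⟩
  rw [IsLocalization.coeSubmodule_span, Submodule.mem_div_span_iff]
  rintro _ ⟨i, hi, rfl⟩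
  obtain ⟨c, hc⟩ := hs ⟨i, hi⟩
  refine Submodule.mem_one.mpr ⟨c, ?_⟩
  rw [mul_assoc, ← Algebra.smul_def]
  exact congrArg Subtype.val hc

theorem IsVCoherent.exists_finite_test_set [IsFractionRing A K] (M : Submonoid A)
    [IsLocalization M B] [IsFractionRing B K] (hB : IsVCoherent B K) {I : Ideal A} (hI : I ≠ 0)
    (hfg : I.FG) :
    ∃ E : Set K, E.Finite ∧ E ⊆ (1 / coeSubmodule K I : Submodule A K) ∧
      ∀ x : K, (∀ e ∈ E, x * e ∈ B) →
        ∀ t ∈ (1 / coeSubmodule K I : Submodule A K), x * t ∈ B := by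
  have hinj : Function.Injective (algebraMap A B) := fun a b hab => IsFractionRing.injective A K
    (by rw [IsScalarTower.algebraMap_apply A B K, hab, ← IsScalarTower.algebraMap_apply])
  have hIB : I.map (algebraMap A B) ≠ 0 := by
    rwa [Ne, Ideal.zero_eq_bot, Ideal.map_eq_bot_iff_of_injective hinj]
  obtain ⟨G, hG, -, hIG⟩ := isVCoherent_iff.mp hB _ hIB (hfg.map _)
  -- Clearing the denominators of the generators `G` of `J_B`, where `(B : IB) = J_B^v`, lands
  -- them in `(A : I)`; being units of `B`, the denominators do not change the test `x * g ∈ B`.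
  have hGdiv (g : K) (hg : g ∈ G) :
      g ∈ (1 : Submodule B K) / coeSubmodule K (I.map (algebraMap A B)) :=
    hIG ▸ Submodule.le_one_div_one_div _ (Submodule.subset_span hg)
  choose! s hsM hs using fun g hg =>
    exists_mem_algebraMap_mul_mem_one_div_coeSubmodule M hfg (hGdiv g hg)
  refine ⟨(fun g => algebraMap A K (s g) * g) '' G, hG.image _, Set.image_subset_iff.mpr hs, ?_⟩
  intro x hx t ht
  have hxG : x ∈ (1 : Submodule B K) / (1 / coeSubmodule K (I.map (algebraMap A B))) := by
    rw [hIG, Submodule.one_div_one_div_one_div, Submodule.mem_div_span_iff]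
    intro g hg
    rw [Subalgebra.mem_one_submodule_iff]
    refine B.mem_of_mul_mem_of_isUnit (IsLocalization.map_units B ⟨s g, hsM g hg⟩) ?_
    simpa only [mul_assoc, mul_comm g] using hx _ ⟨g, hg, rfl⟩
  exact Subalgebra.mem_one_submodule_iff.mp (hxG t (B.mem_one_div_coeSubmodule_map ht))

end Localization

/-- Let `A` be an integral domain that is a locally finite intersection
`A = ⋂_{p∈Δ} A_p` of localizations at primes `p ∈ Δ`, with each `A_p` `v`-coherent.
Then `A` is `v`-coherent. -/
theorem vCoherent_of_locally_finite_intersection_of_vCoherent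
    {A : Type*} [CommRing A] [IsDomain A]
    {K : Type*} [Field K] [Algebra A K] [IsFractionRing A K]
    (Δ : Set (Ideal A)) (hΔ : ∀ p ∈ Δ, p.IsPrime)
    (hint : (⋂ (p : Ideal A), ⋂ (h : p ∈ Δ), ((locAt A K p (hΔ p h) : Subalgebra A K) : Set K))
      = Set.range (algebraMap A K))
    (hlf : ∀ a : A, a ≠ 0 →
      {p : Ideal A | ∃ h : p ∈ Δ,
        ¬IsUnit (algebraMap A (locAt A K p (hΔ p h)) a)}.Finite)
    (hcoh : ∀ (p : Ideal A) (hp : p.IsPrime), p ∈ Δ → IsVCoherent (locAt A K p hp) K) :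
    IsVCoherent A K := by
  rw [isVCoherent_iff]
  intro I hI hfg
  obtain ⟨a, haI, ha⟩ := Submodule.exists_mem_ne_zero_of_ne_bot hI
  choose! E hEfin hEsub hEtest using fun p (hp : p ∈ Δ) =>
    (hcoh p (hΔ p hp) hp).exists_finite_test_set (@Ideal.primeCompl A _ p (hΔ p hp)) hI hfg
  set S := {p : Ideal A | ∃ h : p ∈ Δ, ¬IsUnit (algebraMap A (locAt A K p (hΔ p h)) a)}
  set G := insert 1 (⋃ p ∈ S, E p)
  have hGsub : G ⊆ (1 / coeSubmodule K I : Submodule A K) := by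
    rintro e (rfl | he)
    · exact IsLocalization.mem_one_div_coeSubmodule_iff.mpr fun i _ => by
        simpa only [one_mul] using Submodule.algebraMap_mem i
    · obtain ⟨p, ⟨hp, -⟩, he⟩ := Set.mem_iUnion₂.mp he
      exact hEsub p hp he
  refine ⟨G, ((hlf a ha).biUnion fun p ⟨hp, _⟩ => hEfin p hp).insert 1,
    mt Submodule.span_eq_bot.mp fun h => one_ne_zero (h 1 (Set.mem_insert _ _)),
    le_antisymm ?_ (Submodule.one_div_one_div_le_one_div (Submodule.span_le.mpr hGsub))⟩
  intro t ht x hx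
  rw [Submodule.mem_div_span_iff] at hx
  rw [Submodule.mem_one, ← Set.mem_range, ← hint, Set.mem_iInter₂]
  intro p hp
  set B := locAt A K p (hΔ p hp)
  by_cases hu : IsUnit (algebraMap A B a)
  · exact mul_mem (B.mem_of_mem_one_div_coeSubmodule_of_isUnit haI hu ht)
      (B.mem_of_mem_one_submodule (mul_one x ▸ hx 1 (Set.mem_insert _ _)))
  · rw [mul_comm]
    exact hEtest p hp x (fun e he => B.mem_of_mem_one_submodule
      (hx e (Set.mem_insert_of_mem _ (Set.mem_biUnion ⟨hp, hu⟩ he)))) t ht
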